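/- arXiv:2401.00718 — 4 statements merged into one kernel-verified Lean document; each statement's English description precedes it below -/
import Mathlib

section
/- If f : I → ℝ is φ_{h-s} convex with φ = id (i.e., f(t·x+(1-t)·y) ≤ ρ_s(t) f(x) + ρ_s(1-t) f(y) where ρ_s(t) = (t/h(t))^s), f is nondecreasing, and g : ℝ → I is convex, then f ∘ g satisfies (f∘g)(t·x+(1-t)·y) ≤ ρ_s(t) (f∘g)(x) + ρ_s(1-t) (f∘g)(y) for all x,y and t ∈ [0,1], provided ρ_s(t) ≥ t and ρ_s(1-t) ≥ 1-t, and f∘g ≥ 0. -/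
open Set

theorem stmt3 (I : Set ℝ) (f g h : ℝ → ℝ) (s : ℝ)
    (hconv : ∀ x ∈ I, ∀ y ∈ I, ∀ t ∈ Icc (0:ℝ) 1,
      f (t * x + (1 - t) * y) ≤ (t / h t) ^ s * f x + ((1 - t) / h (1 - t)) ^ s * f y)
    (hmono : ∀ x ∈ I, ∀ y ∈ I, x ≤ y → f x ≤ f y)
    (hg : ConvexOn ℝ univ g)
    (hgI : ∀ x : ℝ, g x ∈ I)
    (hρ : ∀ t ∈ Icc (0:ℝ) 1, t ≤ (t / h t) ^ s ∧ 1 - t ≤ ((1 - t) / h (1 - t)) ^ s)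
    (hfg : ∀ x : ℝ, 0 ≤ f (g x)) :
    ∀ x y : ℝ, ∀ t ∈ Icc (0:ℝ) 1,
      (f ∘ g) (t * x + (1 - t) * y) ≤
        (t / h t) ^ s * (f ∘ g) x + ((1 - t) / h (1 - t)) ^ s * (f ∘ g) y := by
  intro x y t ht
  obtain ⟨ht0, ht1⟩ := ht
  -- continuity of g
  have hcont : ContinuousOn g univ := hg.continuousOn isOpen_univ
  set c : ℝ := t * g x + (1 - t) * g y with hc
  -- c lies between g x and g y
  have hcmem : c ∈ uIcc (g x) (g y) := by
    rcases le_total (g x) (g y) with hle | hle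
    · rw [uIcc_of_le hle]
      constructor
      · nlinarith
      · nlinarith
    · rw [uIcc_of_ge hle]
      constructor
      · nlinarith
      · nlinarith
  -- by IVT, c is in the range of g, hence in I
  have hIVT := intermediate_value_uIcc (hcont.mono (subset_univ (uIcc x y)))
  obtain ⟨w, _, hw⟩ := hIVT hcmem
  have hcI : c ∈ I := hw ▸ hgI w
  -- g of the combination is ≤ c by convexity
  have hgle : g (t * x + (1 - t) * y) ≤ c := by
    have h1t : (0:ℝ) ≤ 1 - t := by linarith
    have hsum : t + (1 - t) = 1 := by ring
    have := hg.2 (mem_univ x) (mem_univ y) ht0 h1t hsum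
    simpa [smul_eq_mul] using this
  calc (f ∘ g) (t * x + (1 - t) * y) = f (g (t * x + (1 - t) * y)) := rfl
    _ ≤ f c := hmono _ (hgI _) _ hcI hgle
    _ ≤ (t / h t) ^ s * f (g x) + ((1 - t) / h (1 - t)) ^ s * f (g y) :=
        hconv _ (hgI x) _ (hgI y) t ⟨ht0, ht1⟩
    _ = (t / h t) ^ s * (f ∘ g) x + ((1 - t) / h (1 - t)) ^ s * (f ∘ g) y := rfl
end

section
/- (Generalised Hermite-Hadamard, left inequality, classical case α = 1) Let f : I → ℝ be continuous and φ_{h-s} convex, and let a, b ∈ [a,b] with φ(a) < φ(b) and the segment [φ(a), φ(b)] ⊆ I. Then f((φ(a)+φ(b))/2) ≤ 2·ρ_s(1/2) · (1/(φ(b)-φ(a))) ∫_{φ(a)}^{φ(b)} f(x) dx, where ρ_s(t) = (t/h(t))^s. -/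
open Set intervalIntegral

theorem stmt9 (f h φ : ℝ → ℝ) (a b s : ℝ) (hab : φ a < φ b)
    (hcont : ContinuousOn f (Icc (φ a) (φ b)))
    (hpos : ∀ t ∈ Icc (0:ℝ) 1, 0 < h t)
    (hconv : ∀ u ∈ Icc (φ a) (φ b), ∀ v ∈ Icc (φ a) (φ b), ∀ t ∈ Icc (0:ℝ) 1,
      f (t * u + (1 - t) * v) ≤
        (t / h t) ^ s * f u + ((1 - t) / h (1 - t)) ^ s * f v) :
    f ((φ a + φ b) / 2) ≤
      2 * ((1 / 2) / h (1 / 2)) ^ s *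
        ((1 / (φ b - φ a)) * ∫ x in (φ a)..(φ b), f x) := by
  set A := φ a with hA
  set B := φ b with hB
  set ρ : ℝ := ((1 / 2) / h (1 / 2)) ^ s with hρ
  have hBA : B - A ≠ 0 := by linarith
  have hAB : A - B ≠ 0 := by linarith
  -- membership lemmas
  have hmem : ∀ t ∈ Icc (0:ℝ) 1, t * A + (1 - t) * B ∈ Icc A B := by
    intro t ht
    obtain ⟨h0, h1⟩ := ht
    constructor <;> nlinarith
  -- pointwise inequality
  have hpt : ∀ t ∈ Icc (0:ℝ) 1,
      f ((A + B) / 2) ≤ ρ * f (t * A + (1 - t) * B) + ρ * f ((1 - t) * A + t * B) := by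
    intro t ht
    have h1 : (1 - t) * A + t * B ∈ Icc A B := by
      have := hmem (1 - t) ⟨by linarith [ht.2], by linarith [ht.1]⟩
      simpa using this
    have h2 := hconv _ (hmem t ht) _ h1 (1/2) (by norm_num)
    have e1 : (1:ℝ) - 1/2 = 1/2 := by norm_num
    rw [e1] at h2
    have e2 : (1/2 : ℝ) * (t * A + (1 - t) * B) + (1/2) * ((1 - t) * A + t * B)
        = (A + B) / 2 := by ring
    rw [e2] at h2
    exact h2
  -- continuity of the two composed functions
  have hcφ1 : ContinuousOn (fun t : ℝ => f (t * A + (1 - t) * B)) (Icc 0 1) := by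
    apply hcont.comp
    · exact (Continuous.continuousOn (by continuity))
    · intro t ht; exact hmem t ht
  have hcφ2 : ContinuousOn (fun t : ℝ => f ((1 - t) * A + t * B)) (Icc 0 1) := by
    apply hcont.comp
    · exact (Continuous.continuousOn (by continuity))
    · intro t ht
      have := hmem (1 - t) ⟨by linarith [ht.2], by linarith [ht.1]⟩
      simpa using this
  have hi1 : IntervalIntegrable (fun t : ℝ => f (t * A + (1 - t) * B)) MeasureTheory.volume 0 1 := by
    apply ContinuousOn.intervalIntegrable
    rwa [uIcc_of_le (by norm_num : (0:ℝ) ≤ 1)]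
  have hi2 : IntervalIntegrable (fun t : ℝ => f ((1 - t) * A + t * B)) MeasureTheory.volume 0 1 := by
    apply ContinuousOn.intervalIntegrable
    rwa [uIcc_of_le (by norm_num : (0:ℝ) ≤ 1)]
  have hiR : IntervalIntegrable (fun t : ℝ => ρ * f (t * A + (1 - t) * B) + ρ * f ((1 - t) * A + t * B)) MeasureTheory.volume 0 1 :=
    (hi1.const_mul ρ).add (hi2.const_mul ρ)
  -- integrate the inequality
  have hint : ∫ t in (0:ℝ)..1, f ((A + B) / 2)
      ≤ ∫ t in (0:ℝ)..1, (ρ * f (t * A + (1 - t) * B) + ρ * f ((1 - t) * A + t * B)) := by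
    apply intervalIntegral.integral_mono_on (by norm_num) intervalIntegrable_const hiR
    intro t ht; exact hpt t ht
  rw [intervalIntegral.integral_const] at hint
  simp only [smul_eq_mul, sub_zero, one_mul] at hint
  rw [intervalIntegral.integral_add (hi1.const_mul ρ) (hi2.const_mul ρ),
      intervalIntegral.integral_const_mul, intervalIntegral.integral_const_mul] at hint
  -- compute the two integrals via substitution
  have e1 : (∫ t in (0:ℝ)..1, f (t * A + (1 - t) * B)) = (1 / (B - A)) * ∫ x in A..B, f x := by
    have : (fun t : ℝ => f (t * A + (1 - t) * B)) = fun t : ℝ => f ((A - B) * t + B) := by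
      funext t; ring_nf
    rw [this, intervalIntegral.integral_comp_mul_add f hAB B]
    simp only [mul_zero, zero_add, mul_one, smul_eq_mul]
    rw [intervalIntegral.integral_symm]
    have : A - B + B = A := by ring
    rw [this]
    field_simp
    ring
  have e2 : (∫ t in (0:ℝ)..1, f ((1 - t) * A + t * B)) = (1 / (B - A)) * ∫ x in A..B, f x := by
    have : (fun t : ℝ => f ((1 - t) * A + t * B)) = fun t : ℝ => f ((B - A) * t + A) := by
      funext t; ring_nf
    rw [this, intervalIntegral.integral_comp_mul_add f hBA A]
    simp only [mul_zero, zero_add, mul_one, smul_eq_mul]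
    have : B - A + A = B := by ring
    rw [this]
    field_simp
  rw [e1, e2] at hint
  calc f ((A + B) / 2) ≤ ρ * ((1 / (B - A)) * ∫ x in A..B, f x) + ρ * ((1 / (B - A)) * ∫ x in A..B, f x) := hint
    _ = 2 * ρ * ((1 / (B - A)) * ∫ x in A..B, f x) := by ring
end

section
/- (Hermite-Hadamard for Breckner s-convex functions, left side) Let s ∈ (0,1) and f : I → ℝ be continuous with f(t·x + (1-t)·y) ≤ t^s f(x) + (1-t)^s f(y) for all x,y ∈ I, t ∈ [0,1]. Then for a < b in I: 2^(s-1) · f((a+b)/2) ≤ (1/(b-a)) ∫_a^b f(x) dx. -/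
open Set intervalIntegral

theorem stmt11 (I : Set ℝ) (f : ℝ → ℝ) (s a b : ℝ) (hs : s ∈ Ioo (0:ℝ) 1)
    (hI : a ∈ I) (hI' : b ∈ I) (hab : a < b) (hIseg : Icc a b ⊆ I)
    (hcont : ContinuousOn f I)
    (hconv : ∀ x ∈ I, ∀ y ∈ I, ∀ t ∈ Icc (0:ℝ) 1,
      f (t * x + (1 - t) * y) ≤ t ^ s * f x + (1 - t) ^ s * f y) :
    (2:ℝ) ^ (s - 1) * f ((a + b) / 2) ≤ (1 / (b - a)) * ∫ x in a..b, f x := by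
  set g : ℝ → ℝ := fun t => f ((b - a) * t + a) with hg
  have hsub : ∀ t ∈ Icc (0:ℝ) 1, (b - a) * t + a ∈ Icc a b := by
    intro t ht
    constructor
    · nlinarith [ht.1, ht.2]
    · nlinarith [ht.1, ht.2]
  have hgc : ContinuousOn g (Icc 0 1) := by
    apply hcont.comp (Continuous.continuousOn (by continuity))
    intro t ht; exact hIseg (hsub t ht)
  have hg2c : ContinuousOn (fun t => g (1 - t)) (Icc (0:ℝ) 1) := by
    apply hgc.comp (Continuous.continuousOn (by continuity))
    intro t ht; exact ⟨by linarith [ht.2], by linarith [ht.1]⟩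
  have hgint : IntervalIntegrable g MeasureTheory.volume 0 1 :=
    hgc.intervalIntegrable_of_Icc (by norm_num)
  have hg2int : IntervalIntegrable (fun t => g (1 - t)) MeasureTheory.volume 0 1 :=
    hg2c.intervalIntegrable_of_Icc (by norm_num)
  have key : ∀ t ∈ Icc (0:ℝ) 1,
      f ((a + b) / 2) ≤ (1/2:ℝ) ^ s * g t + (1/2:ℝ) ^ s * g (1 - t) := by
    intro t ht
    have h1 : (b - a) * t + a ∈ I := hIseg (hsub t ht)
    have ht' : 1 - t ∈ Icc (0:ℝ) 1 := ⟨by linarith [ht.2], by linarith [ht.1]⟩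
    have h2 : (b - a) * (1 - t) + a ∈ I := hIseg (hsub _ ht')
    have h := hconv _ h1 _ h2 (1/2) (by norm_num)
    have heq : (1/2:ℝ) * ((b - a) * t + a) + (1 - 1/2) * ((b - a) * (1 - t) + a)
        = (a + b) / 2 := by ring
    rw [heq] at h
    norm_num [one_div] at h ⊢
    exact h
  have hmono : ∫ _t in (0:ℝ)..1, f ((a + b) / 2)
      ≤ ∫ t in (0:ℝ)..1, ((1/2:ℝ)^s * g t + (1/2:ℝ)^s * g (1-t)) := by
    apply intervalIntegral.integral_mono_on (by norm_num) intervalIntegrable_const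
      ((hgint.const_mul _).add (hg2int.const_mul _))
    exact key
  have hL : (∫ _t in (0:ℝ)..1, f ((a + b) / 2)) = f ((a + b) / 2) := by simp
  have hrefl : (∫ t in (0:ℝ)..1, g (1 - t)) = ∫ t in (0:ℝ)..1, g t := by
    have := intervalIntegral.integral_comp_sub_left g (1:ℝ) (a := 0) (b := 1)
    set_option linter.unnecessarySimpa false in simpa using this
  have hsubst : (∫ t in (0:ℝ)..1, g t) = (b - a)⁻¹ * ∫ x in a..b, f x := by
    have h := intervalIntegral.integral_comp_mul_add f
      (sub_ne_zero.mpr hab.ne') a (a := (0:ℝ)) (b := 1)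
    simp only [mul_zero, zero_add, mul_one] at h
    rw [hg, h]
    norm_num [smul_eq_mul]
  have hR : (∫ t in (0:ℝ)..1, ((1/2:ℝ)^s * g t + (1/2:ℝ)^s * g (1-t)))
      = ((1/2:ℝ)^s + (1/2:ℝ)^s) * ((b - a)⁻¹ * ∫ x in a..b, f x) := by
    rw [intervalIntegral.integral_add (hgint.const_mul _) (hg2int.const_mul _),
      intervalIntegral.integral_const_mul, intervalIntegral.integral_const_mul,
      hrefl, hsubst]
    ring
  have hineq : f ((a + b) / 2)
      ≤ ((1/2:ℝ)^s + (1/2:ℝ)^s) * ((b - a)⁻¹ * ∫ x in a..b, f x) := by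
    rw [← hR, ← hL]; exact hmono
  have hpos : (0:ℝ) < (2:ℝ) ^ (s - 1) := Real.rpow_pos_of_pos two_pos _
  have h12 : (1/2:ℝ) ^ s = (2:ℝ) ^ (-s) := by
    rw [one_div, Real.inv_rpow (by norm_num : (0:ℝ) ≤ 2), ← Real.rpow_neg (by norm_num)]
  have hcd : (2:ℝ) ^ (s - 1) * ((1/2:ℝ)^s + (1/2:ℝ)^s) = 1 := by
    rw [h12, ← two_mul, ← mul_assoc, mul_comm ((2:ℝ)^(s-1)),
      mul_assoc, ← Real.rpow_add (by norm_num : (0:ℝ) < 2),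
      show s - 1 + -s = (-1:ℝ) by ring]
    rw [Real.rpow_neg_one]
    norm_num
  calc (2:ℝ) ^ (s - 1) * f ((a + b) / 2)
      ≤ (2:ℝ) ^ (s - 1) * (((1/2:ℝ)^s + (1/2:ℝ)^s) * ((b - a)⁻¹ * ∫ x in a..b, f x)) :=
        mul_le_mul_of_nonneg_left hineq hpos.le
    _ = (1 / (b - a)) * ∫ x in a..b, f x := by
        rw [← mul_assoc, hcd, one_mul, one_div]
end

section
/- (Hermite-Hadamard for P-functions) Let f : I → ℝ be continuous and satisfy f(t·x + (1-t)·y) ≤ f(x) + f(y) for all x,y ∈ I, t ∈ [0,1]. Then for a < b in I: (1/2)·f((a+b)/2) ≤ (1/(b-a)) ∫_a^b f(x) dx ≤ f(a) + f(b). -/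
open Set intervalIntegral

theorem stmt12 (I : Set ℝ) (f : ℝ → ℝ) (a b : ℝ)
    (hI : a ∈ I) (hI' : b ∈ I) (hab : a < b) (hIseg : Icc a b ⊆ I)
    (hcont : ContinuousOn f I)
    (hP : ∀ x ∈ I, ∀ y ∈ I, ∀ t ∈ Icc (0:ℝ) 1,
      f (t * x + (1 - t) * y) ≤ f x + f y) :
    (1 / 2) * f ((a + b) / 2) ≤ (1 / (b - a)) * ∫ x in a..b, f x ∧
      (1 / (b - a)) * ∫ x in a..b, f x ≤ f a + f b := by
  have hba : (0:ℝ) < b - a := by linarith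
  have hle : a ≤ b := hab.le
  have hcont' : ContinuousOn f (Icc a b) := hcont.mono hIseg
  have hint : IntervalIntegrable f MeasureTheory.volume a b := by
    apply ContinuousOn.intervalIntegrable
    rwa [uIcc_of_le hle]
  have hrefl : Continuous fun x : ℝ => a + b - x := by continuity
  have hmaps : MapsTo (fun x : ℝ => a + b - x) (Icc a b) (Icc a b) := by
    intro x hx
    simp only [mem_Icc] at hx ⊢
    constructor <;> linarith [hx.1, hx.2]
  have hint2 : IntervalIntegrable (fun x => f (a + b - x)) MeasureTheory.volume a b := by
    apply ContinuousOn.intervalIntegrable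
    rw [uIcc_of_le hle]
    exact hcont'.comp hrefl.continuousOn hmaps
  constructor
  · -- lower bound
    have hpt : ∀ x ∈ Icc a b, f ((a + b) / 2) ≤ f x + f (a + b - x) := by
      intro x hx
      have := hP x (hIseg hx) (a + b - x) (hIseg (hmaps hx)) (1/2)
        ⟨by norm_num, by norm_num⟩
      have heq : (1/2 : ℝ) * x + (1 - 1/2) * (a + b - x) = (a + b) / 2 := by ring
      rwa [heq] at this
    have hmono : ∫ x in a..b, f ((a + b) / 2) ≤ ∫ x in a..b, (f x + f (a + b - x)) := by
      apply intervalIntegral.integral_mono_on hle intervalIntegrable_const (hint.add hint2)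
      exact hpt
    rw [intervalIntegral.integral_const, intervalIntegral.integral_add hint hint2] at hmono
    have hsub : (∫ x in a..b, f (a + b - x)) = ∫ x in a..b, f x := by
      have := intervalIntegral.integral_comp_sub_left f (a + b) (a := a) (b := b)
      simpa using this
    rw [hsub, smul_eq_mul] at hmono
    rw [div_mul_eq_mul_div, one_mul, div_mul_eq_mul_div, one_mul,
      div_le_div_iff₀ two_pos hba]
    nlinarith [hmono]
  · -- upper bound
    have hpt : ∀ x ∈ Icc a b, f x ≤ f a + f b := by
      intro x hx
      have ht : (b - x) / (b - a) ∈ Icc (0:ℝ) 1 := by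
        constructor
        · apply div_nonneg (by linarith [hx.2]) hba.le
        · rw [div_le_one hba]; linarith [hx.1]
      have := hP a hI b hI' _ ht
      have heq : (b - x) / (b - a) * a + (1 - (b - x) / (b - a)) * b = x := by
        field_simp
        ring
      rwa [heq] at this
    have hmono : ∫ x in a..b, f x ≤ ∫ x in a..b, (f a + f b) :=
      intervalIntegral.integral_mono_on hle hint intervalIntegrable_const hpt
    rw [intervalIntegral.integral_const, smul_eq_mul] at hmono
    rw [one_div, inv_mul_le_iff₀ hba]
    linarith [hmono]
end
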